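/- Let the n individuals be partitioned into centers I_1,…,I_C with an arbitrary nonnegative m×n valuation matrix A, and fix p ≤ 1 with p ≠ 0. Let b̃ be any pure Nash equilibrium of the Trading Post mechanism with proportional budgets (with respect to centers' GMW_{c,p} objectives) and let ỹ be the induced allocation. Then GMW_p(y^equal) ≤ (1 + max_{c∈[C]} |I_c|/n) · GMW_p(ỹ), where y^equal is the equal-split allocation given by y^equal_{j,i} = 1/n for all j ∈ [m], i ∈ [n]. -/

import Mathlib

open scoped BigOperators

/-- An allocation is feasible if all fractions are nonnegative and each item is
allocated at most once in total. -/
def Feasible {m n : ℕ} (y : Fin m → Fin n → ℝ) : Prop :=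
  (∀ j i, 0 ≤ y j i) ∧ ∀ j, ∑ i, y j i ≤ 1

/-- The (additive) utility of individual `i` under allocation `y`:
`u_i(y) = Σ_j A_{j,i} · y_{j,i}`. -/
noncomputable def util {m n : ℕ} (A : Matrix (Fin m) (Fin n) ℝ)
    (y : Fin m → Fin n → ℝ) (i : Fin n) : ℝ :=
  ∑ j, A j i * y j i

/-- The generalized `p`-mean welfare `GMW_p(y) = ((1/n) Σᵢ uᵢ(y)^p)^{1/p}`
(real powers). -/
noncomputable def GMW {m n : ℕ} (p : ℝ) (A : Matrix (Fin m) (Fin n) ℝ)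
    (y : Fin m → Fin n → ℝ) : ℝ :=
  ((1 / (n : ℝ)) * ∑ i, util A y i ^ p) ^ (1 / p)

open scoped Classical

/-- The set of individuals represented by center `c`. -/
def Ic {n C : ℕ} (ctr : Fin n → Fin C) (c : Fin C) : Finset (Fin n) :=
  Finset.univ.filter fun i => ctr i = c

/-- The Trading Post allocation induced by bids `b`: individual `i` receives the fraction
`b_{j,i} / Σ_{i'} b_{j,i'}` of item `j` (zero if there are no bids on `j`). -/
noncomputable def tpAlloc {m n : ℕ} (b : Fin m → Fin n → ℝ) : Fin m → Fin n → ℝ :=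
  fun j i => if (∑ i', b j i') = 0 then 0 else b j i / ∑ i', b j i'

/-- Bids are valid for the Trading Post mechanism with proportional budgets: nonnegative, and
each center `c` spends at most its budget `|I_c|` in total. -/
def TPValid {m n C : ℕ} (ctr : Fin n → Fin C) (b : Fin m → Fin n → ℝ) : Prop :=
  (∀ j i, 0 ≤ b j i) ∧ ∀ c, ∑ j, ∑ i ∈ Ic ctr c, b j i ≤ ((Ic ctr c).card : ℝ)

/-- `b` is a pure Nash equilibrium of the Trading Post mechanism with proportional budgets,
where center `c` evaluates allocations by `obj c`: no center can strictly improve its objective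
by unilaterally switching to other budget-feasible bids for its own individuals. -/
def TPEquilibrium {m n C : ℕ} (ctr : Fin n → Fin C)
    (obj : Fin C → (Fin m → Fin n → ℝ) → ℝ) (b : Fin m → Fin n → ℝ) : Prop :=
  TPValid ctr b ∧
    ∀ (c : Fin C) (b' : Fin m → Fin n → ℝ), TPValid ctr b' →
      (∀ j i, ctr i ≠ c → b' j i = b j i) →
      obj c (tpAlloc b') ≤ obj c (tpAlloc b)

/-- Center `c`'s objective: the generalized `p`-mean welfare of its own individuals. -/
noncomputable def GMWc {m n C : ℕ} (p : ℝ) (A : Matrix (Fin m) (Fin n) ℝ)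
    (ctr : Fin n → Fin C) (c : Fin C) (y : Fin m → Fin n → ℝ) : ℝ :=
  ((1 / ((Ic ctr c).card : ℝ)) * ∑ i ∈ Ic ctr c, util A y i ^ p) ^ (1 / p)

/-!
A center with `k` individuals can secure each of them at least a `1/(n + k)`-th of every item:
on item `j` it bids, for each of its individuals, a `1/n`-th of what the other centers bid on `j`
plus `k/(nm)`. The others spend at most `n - k` in total, so this is within its budget `k`. At an
equilibrium no such deviation pays, hence on every center the `p`-mean of the equilibrium utilities
is at least `n/(n + k)` times that of the equal split. Comparisons of power means on the blocks of
a partition add up to a comparison on the whole set, which gives the factor `1 + max_c k_c/n`.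
-/

section PMean

variable {ι : Type*} {s : Finset ι} {p : ℝ} {w u : ι → ℝ}

/-- The power mean `((1/|s|) Σ_{i ∈ s} u_i^p)^{1/p}`, with `rpow` conventions: in particular
`0 ^ p = 0` also for `p < 0`, so it is not monotone without a condition on zero entries. -/
noncomputable def pmean (s : Finset ι) (p : ℝ) (u : ι → ℝ) : ℝ :=
  ((1 / (s.card : ℝ)) * ∑ i ∈ s, u i ^ p) ^ (1 / p)

lemma pmean_congr (h : ∀ i ∈ s, w i = u i) : pmean s p w = pmean s p u := by
  rw [pmean, pmean, Finset.sum_congr rfl fun i hi => by rw [h i hi]]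

lemma pmean_nonneg (hu : ∀ i ∈ s, 0 ≤ u i) : 0 ≤ pmean s p u :=
  Real.rpow_nonneg
    (mul_nonneg (by positivity) (Finset.sum_nonneg fun i hi => Real.rpow_nonneg (hu i hi) p)) _

lemma pmean_const_mul (hp : p ≠ 0) {t : ℝ} (ht : 0 ≤ t) (hu : ∀ i ∈ s, 0 ≤ u i) :
    pmean s p (fun i => t * u i) = t * pmean s p u := by
  rw [pmean, pmean, Finset.sum_congr rfl fun i hi => Real.mul_rpow ht (hu i hi),
    ← Finset.mul_sum, mul_left_comm,
    Real.mul_rpow (Real.rpow_nonneg ht p)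
      (mul_nonneg (by positivity) (Finset.sum_nonneg fun i hi => Real.rpow_nonneg (hu i hi) p)),
    ← Real.rpow_mul ht, mul_one_div_cancel hp, Real.rpow_one]

lemma sum_rpow_eq_zero_iff (hp : p ≠ 0) (hu : ∀ i ∈ s, 0 ≤ u i) :
    ∑ i ∈ s, u i ^ p = 0 ↔ ∀ i ∈ s, u i = 0 := by
  rw [Finset.sum_eq_zero_iff_of_nonneg fun i hi => Real.rpow_nonneg (hu i hi) p]
  exact forall₂_congr fun i hi => Real.rpow_eq_zero (hu i hi) hp

lemma pmean_le_pmean_iff_of_pos (hp : 0 < p) (hw : ∀ i ∈ s, 0 ≤ w i)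
    (hu : ∀ i ∈ s, 0 ≤ u i) :
    pmean s p w ≤ pmean s p u ↔ ∑ i ∈ s, w i ^ p ≤ ∑ i ∈ s, u i ^ p := by
  rcases s.eq_empty_or_nonempty with rfl | hs
  · simp [pmean]
  have hk : (0 : ℝ) < 1 / s.card := by simpa using hs.card_pos
  rw [pmean, pmean, Real.rpow_le_rpow_iff
      (mul_nonneg hk.le (Finset.sum_nonneg fun i hi => Real.rpow_nonneg (hw i hi) p))
      (mul_nonneg hk.le (Finset.sum_nonneg fun i hi => Real.rpow_nonneg (hu i hi) p))
      (one_div_pos.2 hp),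
    mul_le_mul_iff_right₀ hk]

lemma pmean_le_pmean_iff_of_neg (hp : p < 0) (hw : ∀ i ∈ s, 0 ≤ w i)
    (hu : ∀ i ∈ s, 0 ≤ u i) (hwu : ∀ i ∈ s, w i = 0 → u i = 0) :
    pmean s p w ≤ pmean s p u ↔
      ∑ i ∈ s, u i ^ p ≤ ∑ i ∈ s, w i ^ p ∧ (∑ i ∈ s, u i ^ p = 0 → ∑ i ∈ s, w i ^ p = 0) := by
  rcases s.eq_empty_or_nonempty with rfl | hs
  · simp [pmean]
  have hk : (0 : ℝ) < 1 / s.card := by simpa using hs.card_pos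
  rw [pmean, pmean]
  set X := ∑ i ∈ s, w i ^ p
  set Y := ∑ i ∈ s, u i ^ p
  have hX : 0 ≤ X := Finset.sum_nonneg fun i hi => Real.rpow_nonneg (hw i hi) p
  have hY : 0 ≤ Y := Finset.sum_nonneg fun i hi => Real.rpow_nonneg (hu i hi) p
  have hXY : X = 0 → Y = 0 := fun h0 =>
    (sum_rpow_eq_zero_iff hp.ne hu).2 fun i hi =>
      hwu i hi ((sum_rpow_eq_zero_iff hp.ne hw).1 h0 i hi)
  have hmean_eq_zero : ∀ Z : ℝ, 0 ≤ Z → ((1 / s.card) * Z) ^ (1 / p) = 0 → Z = 0 :=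
    fun Z hZ h => (mul_eq_zero.1 ((Real.rpow_eq_zero (mul_nonneg hk.le hZ)
      (one_div_ne_zero hp.ne)).1 h)).resolve_left hk.ne'
  rcases hY.eq_or_lt with hY0 | hYpos
  · rw [← hY0]
    have hzero : ((1 / s.card) * (0 : ℝ)) ^ (1 / p) = 0 := by
      rw [mul_zero, Real.zero_rpow (one_div_ne_zero hp.ne)]
    refine ⟨fun h => ⟨hX, fun _ => hmean_eq_zero X hX
      (le_antisymm (hzero ▸ h) (Real.rpow_nonneg (mul_nonneg hk.le hX) _))⟩,
      fun ⟨_, h⟩ => by rw [h rfl]⟩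
  · have hXpos : 0 < X := hX.lt_of_ne fun h => hYpos.ne' (hXY h.symm)
    rw [Real.rpow_le_rpow_iff_of_neg (mul_pos hk hXpos) (mul_pos hk hYpos)
      (one_div_neg.2 hp), mul_le_mul_iff_right₀ hk]
    exact ⟨fun h => ⟨h, fun h0 => absurd h0 hYpos.ne'⟩, And.left⟩

lemma pmean_mono (hp : p ≠ 0) (hw : ∀ i ∈ s, 0 ≤ w i) (hle : ∀ i ∈ s, w i ≤ u i)
    (hwu : ∀ i ∈ s, w i = 0 → u i = 0) : pmean s p w ≤ pmean s p u := by
  have hu : ∀ i ∈ s, 0 ≤ u i := fun i hi => (hw i hi).trans (hle i hi)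
  rcases hp.lt_or_gt with hneg | hpos
  · refine (pmean_le_pmean_iff_of_neg hneg hw hu hwu).2 ⟨Finset.sum_le_sum fun i hi => ?_,
      fun h0 => (sum_rpow_eq_zero_iff hneg.ne hw).2 fun i hi => le_antisymm
        ((hle i hi).trans_eq ((sum_rpow_eq_zero_iff hneg.ne hu).1 h0 i hi)) (hw i hi)⟩
    rcases (hw i hi).eq_or_lt with h0 | hpos
    · rw [← h0, hwu i hi h0.symm]
    · exact Real.rpow_le_rpow_of_nonpos hpos (hle i hi) hneg.le
  · exact (pmean_le_pmean_iff_of_pos hpos hw hu).2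
      (Finset.sum_le_sum fun i hi => Real.rpow_le_rpow (hw i hi) (hle i hi) hpos.le)

lemma pmean_le_pmean_of_fiberwise {κ : Type*} [Fintype κ] [DecidableEq κ] (g : ι → κ)
    (hp : p ≠ 0) (hw : ∀ i ∈ s, 0 ≤ w i) (hu : ∀ i ∈ s, 0 ≤ u i)
    (hwu : ∀ i ∈ s, w i = 0 → u i = 0)
    (h : ∀ c, pmean {i ∈ s | g i = c} p w ≤ pmean {i ∈ s | g i = c} p u) :
    pmean s p w ≤ pmean s p u := by
  have hw' : ∀ c, ∀ i ∈ {i ∈ s | g i = c}, 0 ≤ w i :=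
    fun c i hi => hw i (Finset.mem_filter.1 hi).1
  have hu' : ∀ c, ∀ i ∈ {i ∈ s | g i = c}, 0 ≤ u i :=
    fun c i hi => hu i (Finset.mem_filter.1 hi).1
  rcases hp.lt_or_gt with hneg | hpos
  · have hwu' : ∀ c, ∀ i ∈ {i ∈ s | g i = c}, w i = 0 → u i = 0 :=
      fun c i hi => hwu i (Finset.mem_filter.1 hi).1
    simp only [pmean_le_pmean_iff_of_neg hneg (hw' _) (hu' _) (hwu' _)] at h
    rw [pmean_le_pmean_iff_of_neg hneg hw hu hwu, ← Finset.sum_fiberwise s g,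
      ← Finset.sum_fiberwise s g]
    refine ⟨Finset.sum_le_sum fun c _ => (h c).1, fun h0 => Finset.sum_eq_zero fun c _ =>
      (h c).2 ?_⟩
    exact (Finset.sum_eq_zero_iff_of_nonneg fun c _ => Finset.sum_nonneg fun i hi =>
      Real.rpow_nonneg (hu' c i hi) p).1 h0 c (Finset.mem_univ c)
  · simp only [pmean_le_pmean_iff_of_pos hpos (hw' _) (hu' _)] at h
    rw [pmean_le_pmean_iff_of_pos hpos hw hu, ← Finset.sum_fiberwise s g,
      ← Finset.sum_fiberwise s g]
    exact Finset.sum_le_sum fun c _ => h c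

end PMean

lemma GMW_eq_pmean {m n : ℕ} (p : ℝ) (A : Matrix (Fin m) (Fin n) ℝ) (y : Fin m → Fin n → ℝ) :
    GMW p A y = pmean Finset.univ p (util A y) := by
  simp [GMW, pmean]

section Utility

variable {m n : ℕ} {A : Matrix (Fin m) (Fin n) ℝ} {y y' : Fin m → Fin n → ℝ} {i : Fin n}

lemma util_nonneg (hA : ∀ j i, 0 ≤ A j i) (hy : ∀ j, 0 ≤ y j i) : 0 ≤ util A y i :=
  Finset.sum_nonneg fun j _ => mul_nonneg (hA j i) (hy j)

lemma util_le_util (hA : ∀ j i, 0 ≤ A j i) (hy : ∀ j, y j i ≤ y' j i) :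
    util A y i ≤ util A y' i :=
  Finset.sum_le_sum fun j _ => mul_le_mul_of_nonneg_left (hy j) (hA j i)

lemma util_const (A : Matrix (Fin m) (Fin n) ℝ) (t : ℝ) (i : Fin n) :
    util A (fun _ _ => t) i = t * ∑ j, A j i := by
  simp only [util, Finset.mul_sum, mul_comm]

end Utility

section TradingPost

variable {m n C : ℕ} {b : Fin m → Fin n → ℝ}

lemma tpAlloc_nonneg (hb : ∀ j i, 0 ≤ b j i) (j : Fin m) (i : Fin n) : 0 ≤ tpAlloc b j i := by
  unfold tpAlloc
  split_ifs
  · exact le_rfl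
  · exact div_nonneg (hb j i) (Finset.sum_nonneg fun i' _ => hb j i')

lemma tpAlloc_le_one (hb : ∀ j i, 0 ≤ b j i) (j : Fin m) (i : Fin n) : tpAlloc b j i ≤ 1 := by
  unfold tpAlloc
  split_ifs
  · exact zero_le_one
  · exact div_le_one_of_le₀ (Finset.single_le_sum (fun i' _ => hb j i') (Finset.mem_univ i))
      (Finset.sum_nonneg fun i' _ => hb j i')

lemma util_tpAlloc_eq_zero_of_util_const_eq_zero {A : Matrix (Fin m) (Fin n) ℝ}
    (hA : ∀ j i, 0 ≤ A j i) (hb : ∀ j i, 0 ≤ b j i) {t : ℝ} (ht : t ≠ 0) {i : Fin n}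
    (h : util A (fun _ _ => t) i = 0) : util A (tpAlloc b) i = 0 := by
  rw [util_const, mul_eq_zero, or_iff_right ht] at h
  refine le_antisymm ?_ (util_nonneg hA fun j => tpAlloc_nonneg hb j i)
  calc util A (tpAlloc b) i ≤ util A (fun _ _ => 1) i :=
        util_le_util hA fun j => tpAlloc_le_one hb j i
    _ = 0 := by rw [util_const, h, mul_zero]

variable {ctr : Fin n → Fin C} {c : Fin C}

noncomputable def outsideBid (ctr : Fin n → Fin C) (c : Fin C) (b : Fin m → Fin n → ℝ)
    (j : Fin m) : ℝ :=
  ∑ i ∈ (Ic ctr c)ᶜ, b j i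

/-- The bid that center `c` places on item `j` for each of its individuals in its deviation: at
least a `1/n`-th of the others' total bid, so that each of them receives at least
`1/(n + |I_c|)` of the item, and positive even on items nobody else bids on. -/
noncomputable def deviationBid (ctr : Fin n → Fin C) (c : Fin C) (b : Fin m → Fin n → ℝ)
    (j : Fin m) : ℝ :=
  (outsideBid ctr c b j + (Ic ctr c).card / m) / n

noncomputable def deviation (ctr : Fin n → Fin C) (c : Fin C) (b : Fin m → Fin n → ℝ) :
    Fin m → Fin n → ℝ :=
  fun j i => if ctr i = c then deviationBid ctr c b j else b j i

lemma mem_Ic {i : Fin n} : i ∈ Ic ctr c ↔ ctr i = c := by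
  simp [Ic]

lemma outsideBid_nonneg (hb : ∀ j i, 0 ≤ b j i) (j : Fin m) : 0 ≤ outsideBid ctr c b j :=
  Finset.sum_nonneg fun i _ => hb j i

lemma deviationBid_nonneg (hb : ∀ j i, 0 ≤ b j i) (j : Fin m) : 0 ≤ deviationBid ctr c b j := by
  have := outsideBid_nonneg (ctr := ctr) (c := c) hb j
  unfold deviationBid
  positivity

lemma sum_outsideBid_add_card_le (hb : TPValid ctr b) :
    ∑ j, outsideBid ctr c b j + (Ic ctr c).card ≤ n := by
  have hspent : ∑ j, ∑ i, b j i = ∑ c', ∑ j, ∑ i ∈ Ic ctr c', b j i :=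
    (Finset.sum_congr rfl fun j _ => (Finset.sum_fiberwise Finset.univ ctr (b j)).symm).trans
      Finset.sum_comm
  have hcard : ∑ c', ((Ic ctr c').card : ℝ) = n := by
    have h := Finset.card_eq_sum_card_fiberwise (s := Finset.univ) (t := Finset.univ)
      fun i _ => Finset.mem_univ (ctr i)
    rw [Finset.card_univ, Fintype.card_fin] at h
    exact_mod_cast h.symm
  have hslack : (Ic ctr c).card - ∑ j, ∑ i ∈ Ic ctr c, b j i ≤
      ∑ c', (((Ic ctr c').card : ℝ) - ∑ j, ∑ i ∈ Ic ctr c', b j i) :=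
    Finset.single_le_sum (f := fun c' => ((Ic ctr c').card : ℝ) - ∑ j, ∑ i ∈ Ic ctr c', b j i)
      (fun c' _ => sub_nonneg.2 (hb.2 c')) (Finset.mem_univ c)
  have hsplit : ∑ j, outsideBid ctr c b j + ∑ j, ∑ i ∈ Ic ctr c, b j i = ∑ j, ∑ i, b j i := by
    rw [← Finset.sum_add_distrib]
    exact Finset.sum_congr rfl fun j _ => Finset.sum_compl_add_sum _ _
  rw [Finset.sum_sub_distrib, hcard, ← hspent] at hslack
  linarith

lemma deviation_of_ne {j : Fin m} {i : Fin n} (h : ctr i ≠ c) : deviation ctr c b j i = b j i :=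
  if_neg h

lemma deviation_of_mem {j : Fin m} {i : Fin n} (h : i ∈ Ic ctr c) :
    deviation ctr c b j i = deviationBid ctr c b j :=
  if_pos (mem_Ic.1 h)

lemma sum_Ic_deviation (j : Fin m) :
    ∑ i ∈ Ic ctr c, deviation ctr c b j i = (Ic ctr c).card * deviationBid ctr c b j := by
  rw [Finset.sum_congr rfl fun i hi => deviation_of_mem hi, Finset.sum_const,
    nsmul_eq_mul]

lemma sum_deviation (j : Fin m) :
    ∑ i, deviation ctr c b j i =
      outsideBid ctr c b j + (Ic ctr c).card * deviationBid ctr c b j := by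
  rw [← Finset.sum_compl_add_sum (Ic ctr c), sum_Ic_deviation, outsideBid]
  congr 1
  exact Finset.sum_congr rfl fun i hi => deviation_of_ne (mem_Ic.not.1 (Finset.mem_compl.1 hi))

lemma tpValid_deviation (hb : TPValid ctr b) : TPValid ctr (deviation ctr c b) := by
  refine ⟨fun j i => ?_, fun c' => ?_⟩
  · unfold deviation
    split_ifs
    exacts [deviationBid_nonneg hb.1 j, hb.1 j i]
  rcases eq_or_ne c' c with rfl | hc
  · have hsum : ∑ j, deviationBid ctr c' b j ≤ 1 := by
      simp only [deviationBid, ← Finset.sum_div]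
      refine div_le_one_of_le₀ ?_ (Nat.cast_nonneg n)
      have hm : ∑ _j : Fin m, ((Ic ctr c').card : ℝ) / m ≤ (Ic ctr c').card := by
        rw [Finset.sum_const, Finset.card_univ, Fintype.card_fin, nsmul_eq_mul]
        rcases eq_or_ne m 0 with rfl | hm
        · simp
        · rw [mul_div_cancel₀ _ (Nat.cast_ne_zero.2 hm)]
      rw [Finset.sum_add_distrib]
      linarith [sum_outsideBid_add_card_le (c := c') hb]
    simp only [sum_Ic_deviation, ← Finset.mul_sum]
    exact mul_le_of_le_one_right (Nat.cast_nonneg _) hsum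
  · rw [Finset.sum_congr rfl fun j _ => Finset.sum_congr rfl fun i hi =>
      deviation_of_ne ((mem_Ic.1 hi).trans_ne hc)]
    exact hb.2 c'

lemma one_div_le_tpAlloc_deviation (hb : ∀ j i, 0 ≤ b j i) (j : Fin m) {i : Fin n}
    (hi : i ∈ Ic ctr c) : 1 / (n + (Ic ctr c).card : ℝ) ≤ tpAlloc (deviation ctr c b) j i := by
  set k : ℝ := ((Ic ctr c).card : ℝ)
  set s := outsideBid ctr c b j
  set β := deviationBid ctr c b j
  have hs : 0 ≤ s := outsideBid_nonneg hb j
  have hk : 0 < k := Nat.cast_pos.2 (Finset.card_pos.2 ⟨i, hi⟩)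
  have hn : (0 : ℝ) < n := by exact_mod_cast i.pos
  have hm : (0 : ℝ) < m := by exact_mod_cast j.pos
  have hβ : 0 < β := by
    unfold β deviationBid
    positivity
  have hnβ : s ≤ n * β := by
    unfold β deviationBid
    rw [mul_div_cancel₀ _ hn.ne']
    linarith [div_pos hk hm]
  have hden : 0 < s + k * β := by positivity
  rw [tpAlloc, sum_deviation, if_neg hden.ne', deviation_of_mem hi,
    div_le_div_iff₀ (by positivity) hden]
  linarith

lemma GMWc_equalSplit_le {A : Matrix (Fin m) (Fin n) ℝ} (hA : ∀ j i, 0 ≤ A j i) {p : ℝ}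
    (hp : p ≠ 0) (heq : TPEquilibrium ctr (fun c y => GMWc p A ctr c y) b) (c : Fin C) :
    GMWc p A ctr c (fun _ _ => 1 / (n : ℝ)) ≤
      (1 + (Ic ctr c).card / n) * GMWc p A ctr c (tpAlloc b) := by
  set k : ℝ := ((Ic ctr c).card : ℝ)
  have hscale : ∀ i ∈ Ic ctr c, util A (fun _ _ => 1 / (n : ℝ)) i =
      (1 + k / n) * util A (fun _ _ => 1 / (n + k)) i := by
    intro i _
    have hn : (n : ℝ) ≠ 0 := Nat.cast_ne_zero.2 i.pos.ne'
    have hk : 0 ≤ k := Nat.cast_nonneg _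
    rw [util_const, util_const, ← mul_assoc]
    congr 1
    field_simp
  have hlow : ∀ i ∈ Ic ctr c, util A (fun _ _ => 1 / (n + k)) i ≤
      util A (tpAlloc (deviation ctr c b)) i := fun i hi =>
    util_le_util hA fun j => one_div_le_tpAlloc_deviation heq.1.1 j hi
  have hzero : ∀ i ∈ Ic ctr c, util A (fun _ _ => 1 / (n + k)) i = 0 →
      util A (tpAlloc (deviation ctr c b)) i = 0 := fun i _ =>
    util_tpAlloc_eq_zero_of_util_const_eq_zero hA (tpValid_deviation heq.1).1
      (one_div_ne_zero (by positivity [i.pos]))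
  have hgain : 0 ≤ 1 + k / n := by positivity
  calc GMWc p A ctr c (fun _ _ => 1 / (n : ℝ))
      = pmean (Ic ctr c) p (fun i => (1 + k / n) * util A (fun _ _ => 1 / (n + k)) i) :=
        pmean_congr hscale
    _ = (1 + k / n) * pmean (Ic ctr c) p (util A (fun _ _ => 1 / (n + k))) :=
        pmean_const_mul hp hgain fun i _ => util_nonneg hA fun _ => by positivity
    _ ≤ (1 + k / n) * GMWc p A ctr c (tpAlloc (deviation ctr c b)) :=
        mul_le_mul_of_nonneg_left
          (pmean_mono hp (fun i _ => util_nonneg hA fun _ => by positivity) hlow hzero) hgain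
    _ ≤ (1 + k / n) * GMWc p A ctr c (tpAlloc b) :=
        mul_le_mul_of_nonneg_left
          (heq.2 c _ (tpValid_deviation heq.1) fun _ _ => deviation_of_ne) hgain

end TradingPost

theorem tradingPost_equal_split_vs_equilibrium_general {m n C : ℕ}
    (A : Matrix (Fin m) (Fin n) ℝ) (hA0 : ∀ j i, 0 ≤ A j i)
    (p : ℝ) (hp0 : p ≠ 0)
    (ctr : Fin n → Fin C)
    (b : Fin m → Fin n → ℝ)
    (heq : TPEquilibrium ctr (fun c y => GMWc p A ctr c y) b) :
    GMW p A (fun _ _ => 1 / (n : ℝ)) ≤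
      (1 + ⨆ c : Fin C, ((Ic ctr c).card : ℝ) / n) * GMW p A (tpAlloc b) := by
  set Λ := 1 + ⨆ c : Fin C, ((Ic ctr c).card : ℝ) / n
  have hΛ : 0 ≤ Λ := add_nonneg zero_le_one (Real.iSup_nonneg fun _ => by positivity)
  have hb := heq.1.1
  have hf : ∀ i ∈ Finset.univ, 0 ≤ util A (tpAlloc b) i := fun i _ =>
    util_nonneg hA0 fun j => tpAlloc_nonneg hb j i
  rw [GMW_eq_pmean, GMW_eq_pmean, ← pmean_const_mul hp0 hΛ hf]
  refine pmean_le_pmean_of_fiberwise ctr hp0 (fun i _ => util_nonneg hA0 fun _ => by positivity)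
    (fun i hi => mul_nonneg hΛ (hf i hi)) (fun i _ h => mul_eq_zero_of_right _
      (util_tpAlloc_eq_zero_of_util_const_eq_zero hA0 hb
        (one_div_ne_zero (Nat.cast_ne_zero.2 i.pos.ne')) h)) fun c => ?_
  calc GMWc p A ctr c (fun _ _ => 1 / (n : ℝ))
      ≤ (1 + (Ic ctr c).card / n) * GMWc p A ctr c (tpAlloc b) :=
        GMWc_equalSplit_le hA0 hp0 heq c
    _ ≤ Λ * GMWc p A ctr c (tpAlloc b) :=
        mul_le_mul_of_nonneg_right
          (add_le_add_right (le_ciSup (f := fun c => ((Ic ctr c).card : ℝ) / n)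
            (Set.finite_range _).bddAbove c) 1)
          (pmean_nonneg fun i hi => hf i (Finset.mem_univ i))
    _ = pmean (Ic ctr c) p (fun i => Λ * util A (tpAlloc b) i) :=
        (pmean_const_mul hp0 hΛ fun i _ => hf i (Finset.mem_univ i)).symm

/-- At every pure Nash equilibrium `b` of the Trading Post mechanism with proportional budgets
(for any nonnegative valuation matrix and any `p ≤ 1`, `p ≠ 0`),
`GMW_p(y^equal) ≤ (1 + max_c |I_c|/n) · GMW_p(ỹ)`, where `y^equal_{j,i} = 1/n` is the equal-split
allocation and `ỹ = tpAlloc b` is the equilibrium allocation. -/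
theorem tradingPost_equal_split_vs_equilibrium {m n C : ℕ}
    (hm : 0 < m) (hn : 0 < n) (hC : 0 < C)
    (A : Matrix (Fin m) (Fin n) ℝ) (hA0 : ∀ j i, 0 ≤ A j i)
    (p : ℝ) (hp1 : p ≤ 1) (hp0 : p ≠ 0)
    (ctr : Fin n → Fin C) (hsurj : ∀ c, ∃ i, ctr i = c)
    (b : Fin m → Fin n → ℝ)
    (heq : TPEquilibrium ctr (fun c y => GMWc p A ctr c y) b) :
    GMW p A (fun _ _ => 1 / (n : ℝ)) ≤
      (1 + ⨆ c : Fin C, ((Ic ctr c).card : ℝ) / n) * GMW p A (tpAlloc b) :=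
  tradingPost_equal_split_vs_equilibrium_general A hA0 p hp0 ctr b heq
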